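/- arXiv:2407.11473 — 3 statements merged into one kernel-verified Lean document; each statement's English description precedes it below -/
import Mathlib

section
/- For Hermitian matrices F_1,...,F_m and a real vector λ, the partial derivative of the partition function ℓ(λ·F) = tr exp(Σ_j λ_j F_j) with respect to λ_{j'} equals tr(F_{j'} exp(Σ_j λ_j F_j)). -/
open Matrix

/-- For Hermitian matrices `F 1, ..., F m` and a real vector `lam`, the partial derivative of
the partition function `ℓ(λ·F) = tr exp (∑ j, λ j • F j)` with respect to `λ j'` equals
`tr (F j' * exp (∑ j, λ j • F j))`. -/
theorem partial_deriv_partition_function {n m : ℕ}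
    (F : Fin m → Matrix (Fin n) (Fin n) ℂ) (hF : ∀ j, (F j).IsHermitian)
    (lam : Fin m → ℝ) (j' : Fin m) :
    HasDerivAt
      (fun t : ℝ =>
        (NormedSpace.exp (∑ j, ((Function.update lam j' t j : ℝ) : ℂ) • F j)).trace)
      ((F j' * NormedSpace.exp (∑ j, ((lam j : ℝ) : ℂ) • F j)).trace)
      (lam j') := by
  clear hF
  -- trivial case `n = 0`
  rcases Nat.eq_zero_or_pos n with rfl | hn
  · have h0 : ∀ X : Matrix (Fin 0) (Fin 0) ℂ, X.trace = 0 := fun X => by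
      simp [Matrix.trace]
    simp only [h0]
    exact hasDerivAt_const _ (0 : ℂ)
  haveI : Nonempty (Fin n) := ⟨⟨0, hn⟩⟩
  -- install the `L∞`-operator norm on matrices
  letI : SeminormedRing (Matrix (Fin n) (Fin n) ℂ) := Matrix.linftyOpSemiNormedRing
  letI : NormedRing (Matrix (Fin n) (Fin n) ℂ) := Matrix.linftyOpNormedRing
  letI : NormedAlgebra ℂ (Matrix (Fin n) (Fin n) ℂ) := Matrix.linftyOpNormedAlgebra
  letI : NormOneClass (Matrix (Fin n) (Fin n) ℂ) := Matrix.linfty_opNormOneClass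
  set B : Matrix (Fin n) (Fin n) ℂ := F j' with hB
  set C : Matrix (Fin n) (Fin n) ℂ :=
    ∑ j ∈ Finset.univ.erase j', ((lam j : ℝ) : ℂ) • F j with hC
  set M : ℝ → Matrix (Fin n) (Fin n) ℂ := fun t => C + t • B with hMdef
  -- rewriting the sum as a line `t ↦ C + t • B`
  have hsum : ∀ t : ℝ, (∑ j, ((Function.update lam j' t j : ℝ) : ℂ) • F j) = M t := by
    intro t
    have h1 : (fun j => ((Function.update lam j' t j : ℝ) : ℂ) • F j)
        = Function.update (fun j => ((lam j : ℝ) : ℂ) • F j) j' (((t : ℝ) : ℂ) • F j') := by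
      funext j
      by_cases h : j = j'
      · subst h; simp
      · simp [Function.update_of_ne h]
    rw [h1, Finset.sum_update_of_mem (Finset.mem_univ j')]
    rw [hMdef, add_comm]
    congr 1
    rw [hC, Finset.erase_eq]
  have hsum' : (∑ j, ((lam j : ℝ) : ℂ) • F j) = M (lam j') := by
    have := hsum (lam j')
    rwa [Function.update_eq_self] at this
  have hM : ∀ t : ℝ, HasDerivAt M B t := fun t => by
    have h := ((hasDerivAt_id t).smul_const B).const_add C
    simp only [one_smul] at h
    exact h
  -- derivative of powers
  have hpow : ∀ (k : ℕ) (t : ℝ), HasDerivAt (fun s => (M s) ^ k)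
      (∑ i ∈ Finset.range k, (M t) ^ i * B * (M t) ^ (k - 1 - i)) t := by
    intro k
    induction k with
    | zero => intro t; simp only [pow_zero, Finset.range_zero, Finset.sum_empty]; exact hasDerivAt_const t (1 : Matrix (Fin n) (Fin n) ℂ)
    | succ k ih =>
      intro t
      have h1 : (fun s => (M s) ^ (k + 1)) = fun s => (M s) ^ k * M s := by
        funext s; rw [pow_succ]
      rw [h1]
      have h2 := (ih t).mul (hM t)
      refine h2.congr_deriv (Eq.symm ?_)
      rw [Finset.sum_range_succ, Finset.sum_mul]
      congr 1
      · refine Finset.sum_congr rfl fun i hi => ?_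
        rw [Finset.mem_range] at hi
        have hexp : k + 1 - 1 - i = (k - 1 - i) + 1 := by omega
        rw [hexp, pow_succ, ← mul_assoc]
      · simp
  -- trace as a continuous ℝ-linear map
  set T : Matrix (Fin n) (Fin n) ℂ →L[ℝ] ℂ :=
    LinearMap.toContinuousLinearMap
      ((Matrix.traceLinearMap (Fin n) ℂ ℂ).restrictScalars ℝ) with hT
  have hTapp : ∀ X : Matrix (Fin n) (Fin n) ℂ, T X = X.trace := fun X => rfl
  -- trace norm bound
  have htr : ∀ X : Matrix (Fin n) (Fin n) ℂ, ‖X.trace‖ ≤ n * ‖X‖ := by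
    intro X
    calc ‖X.trace‖ ≤ ∑ i, ‖X i i‖ := norm_sum_le _ _
    _ ≤ ∑ _i : Fin n, ‖X‖ := by
        refine Finset.sum_le_sum fun i _ => ?_
        have h1 : ‖X i i‖₊ ≤ ‖X‖₊ := by
          rw [Matrix.linfty_opNNNorm_def]
          refine le_trans ?_ (Finset.le_sup (f := fun i => ∑ j, ‖X i j‖₊) (Finset.mem_univ i))
          exact Finset.single_le_sum (f := fun j => ‖X i j‖₊) (fun j _ => zero_le)
            (Finset.mem_univ i)
        exact_mod_cast h1
    _ = n * ‖X‖ := by simp [Finset.sum_const]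
  -- the series of functions and its term-by-term derivative
  set g : ℕ → ℝ → ℂ := fun k t => ((k.factorial : ℂ))⁻¹ • ((M t) ^ k).trace with hgdef
  set g' : ℕ → ℝ → ℂ :=
    fun k t => ((k : ℂ) * ((k.factorial : ℂ))⁻¹) • (B * (M t) ^ (k - 1)).trace with hg'def
  have hg : ∀ (k : ℕ) (t : ℝ), HasDerivAt (g k) (g' k t) t := by
    intro k t
    have h := ((T.hasFDerivAt.comp_hasDerivAt t (hpow k t)).const_smul
      (((k.factorial : ℂ))⁻¹))
    refine h.congr_deriv (Eq.symm ?_)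
    change g' k t = ((k.factorial : ℂ))⁻¹ • (∑ i ∈ Finset.range k, M t ^ i * B * M t ^ (k - 1 - i)).trace
    have hterm : ∀ i ∈ Finset.range k,
        ((M t) ^ i * B * (M t) ^ (k - 1 - i)).trace = (B * (M t) ^ (k - 1)).trace := by
      intro i hi
      rw [Finset.mem_range] at hi
      rw [Matrix.trace_mul_cycle, ← pow_add]
      have : k - 1 - i + i = k - 1 := by omega
      rw [this, ← Matrix.trace_mul_comm]
    rw [Matrix.trace_sum, Finset.sum_congr rfl hterm, Finset.sum_const, Finset.card_range]
    simp only [hg'def, nsmul_eq_mul, smul_eq_mul]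
    ring
  -- uniform bounds on a ball
  set R : ℝ := ‖C‖ + (|lam j'| + 1) * ‖B‖ with hRdef
  have hR0 : 0 ≤ R := by positivity
  have hMb : ∀ y ∈ Metric.ball (lam j') 1, ‖M y‖ ≤ R := by
    intro y hy
    rw [Metric.mem_ball, Real.dist_eq] at hy
    have hyabs : |y| ≤ |lam j'| + 1 := by
      have := abs_sub_abs_le_abs_sub y (lam j')
      linarith
    calc ‖M y‖ ≤ ‖C‖ + ‖y • B‖ := norm_add_le _ _
    _ = ‖C‖ + |y| * ‖B‖ := by rw [norm_smul, Real.norm_eq_abs]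
    _ ≤ R := by
        rw [hRdef]
        have : |y| * ‖B‖ ≤ (|lam j'| + 1) * ‖B‖ :=
          mul_le_mul_of_nonneg_right hyabs (norm_nonneg _)
        linarith
  set u : ℕ → ℝ := fun k => n * ‖B‖ * ((k : ℝ) * R ^ (k - 1) / k.factorial) with hudef
  have hu : Summable u := by
    apply Summable.mul_left
    rw [← summable_nat_add_iff 1]
    refine (Real.summable_pow_div_factorial R).congr fun k => ?_
    rw [Nat.add_sub_cancel, Nat.factorial_succ]
    have hk : ((k.factorial : ℝ)) ≠ 0 := Nat.cast_ne_zero.mpr k.factorial_ne_zero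
    push_cast
    field_simp
  have hg'b : ∀ (k : ℕ), ∀ y ∈ Metric.ball (lam j') 1, ‖g' k y‖ ≤ u k := by
    intro k y hy
    have h1 : ‖(B * (M y) ^ (k - 1)).trace‖ ≤ n * (‖B‖ * R ^ (k - 1)) := by
      refine (htr _).trans ?_
      refine mul_le_mul_of_nonneg_left ?_ (by positivity)
      refine (norm_mul_le _ _).trans ?_
      refine mul_le_mul_of_nonneg_left ?_ (norm_nonneg _)
      exact (norm_pow_le _ _).trans (pow_le_pow_left₀ (norm_nonneg _) (hMb y hy) _)
    have h2 : ‖((k : ℂ) * ((k.factorial : ℂ))⁻¹)‖ = (k : ℝ) / k.factorial := by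
      rw [norm_mul, norm_inv, Complex.norm_natCast, Complex.norm_natCast, div_eq_mul_inv]
    calc ‖g' k y‖ = ‖((k : ℂ) * ((k.factorial : ℂ))⁻¹)‖ * ‖(B * (M y) ^ (k - 1)).trace‖ := by
          rw [hg'def]; exact norm_smul _ _
    _ ≤ (k : ℝ) / k.factorial * (n * (‖B‖ * R ^ (k - 1))) := by
        rw [h2]; exact mul_le_mul_of_nonneg_left h1 (by positivity)
    _ = u k := by rw [hudef]; ring
  -- summability at the base point
  have hg0 : Summable fun k => g k (lam j') := by
    refine Summable.of_norm_bounded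
      ((Real.summable_pow_div_factorial ‖M (lam j')‖).mul_left (n : ℝ)) fun k => ?_
    have h1 : ‖((M (lam j')) ^ k).trace‖ ≤ n * ‖M (lam j')‖ ^ k :=
      (htr _).trans (mul_le_mul_of_nonneg_left (norm_pow_le _ _) (by positivity))
    calc ‖g k (lam j')‖
        = ‖(((k.factorial : ℕ) : ℂ))⁻¹‖ * ‖((M (lam j')) ^ k).trace‖ := by
          rw [hgdef]; exact norm_smul _ _
    _ ≤ (k.factorial : ℝ)⁻¹ * (n * ‖M (lam j')‖ ^ k) := by
        rw [norm_inv, Complex.norm_natCast]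
        exact mul_le_mul_of_nonneg_left h1 (by positivity)
    _ = n * (‖M (lam j')‖ ^ k / k.factorial) := by ring
  -- the main term-by-term differentiation
  have hmem : lam j' ∈ Metric.ball (lam j') 1 := Metric.mem_ball_self one_pos
  have main : HasDerivAt (fun z => ∑' k, g k z) (∑' k, g' k (lam j')) (lam j') :=
    hasDerivAt_tsum_of_isPreconnected hu Metric.isOpen_ball
      (convex_ball _ _).isPreconnected (fun k y _ => hg k y) hg'b hmem hg0 hmem
  -- identify the function with `t ↦ tr exp (M t)`
  have hfun : ∀ z : ℝ,
      (NormedSpace.exp (∑ j, ((Function.update lam j' z j : ℝ) : ℂ) • F j)).trace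
        = ∑' k, g k z := by
    intro z
    rw [hsum z, NormedSpace.exp_eq_tsum (𝕂 := ℂ)]
    have hs : Summable fun k : ℕ => ((k.factorial : ℂ))⁻¹ • (M z) ^ k :=
      NormedSpace.expSeries_summable' (𝕂 := ℂ) (M z)
    calc (∑' k : ℕ, ((k.factorial : ℂ))⁻¹ • (M z) ^ k).trace
        = T (∑' k : ℕ, ((k.factorial : ℂ))⁻¹ • (M z) ^ k) := rfl
    _ = ∑' k : ℕ, T (((k.factorial : ℂ))⁻¹ • (M z) ^ k) := T.map_tsum hs
    _ = ∑' k, g k z := by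
        refine tsum_congr fun k => ?_
        rw [hTapp, hgdef, Matrix.trace_smul]
  -- identify the derivative with `tr (B * exp (M (lam j')))`
  have hg'sum : Summable fun k => g' k (lam j') :=
    Summable.of_norm_bounded hu fun k => hg'b k _ hmem
  have hval : (∑' k, g' k (lam j'))
      = (B * NormedSpace.exp (M (lam j'))).trace := by
    set L : Matrix (Fin n) (Fin n) ℂ →L[ℝ] ℂ :=
      LinearMap.toContinuousLinearMap
        (((Matrix.traceLinearMap (Fin n) ℂ ℂ).comp
          (LinearMap.mulLeft ℂ B)).restrictScalars ℝ) with hL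
    have hLapp : ∀ X : Matrix (Fin n) (Fin n) ℂ, L X = (B * X).trace := fun X => rfl
    have hs : Summable fun k : ℕ => ((k.factorial : ℂ))⁻¹ • (M (lam j')) ^ k :=
      NormedSpace.expSeries_summable' (𝕂 := ℂ) (M (lam j'))
    have hrhs : (B * NormedSpace.exp (M (lam j'))).trace
        = ∑' k : ℕ, ((k.factorial : ℂ))⁻¹ • (B * (M (lam j')) ^ k).trace := by
      rw [NormedSpace.exp_eq_tsum (𝕂 := ℂ), ← hLapp, L.map_tsum hs]
      refine tsum_congr fun k => ?_
      rw [hLapp, mul_smul_comm, Matrix.trace_smul]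
    rw [hrhs, Summable.tsum_eq_zero_add hg'sum]
    have h0 : g' 0 (lam j') = 0 := by simp [hg'def]
    rw [h0, zero_add]
    refine tsum_congr fun k => ?_
    rw [hg'def]
    simp only [Nat.add_sub_cancel, Nat.factorial_succ, smul_eq_mul]
    have hk : ((k.factorial : ℂ)) ≠ 0 := Nat.cast_ne_zero.mpr k.factorial_ne_zero
    have hk1 : ((k : ℂ) + 1) ≠ 0 := by
      have : ((k + 1 : ℕ) : ℂ) ≠ 0 := Nat.cast_ne_zero.mpr (Nat.succ_ne_zero k)
      push_cast at this; exact this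
    push_cast
    field_simp
  have hfun' : (fun t : ℝ =>
      (NormedSpace.exp (∑ j, ((Function.update lam j' t j : ℝ) : ℂ) • F j)).trace)
      = fun z => ∑' k, g k z := funext hfun
  rw [hfun', hsum', ← hval]
  exact main
end

section
/- For Hermitian matrices F_1,...,F_m and λ ∈ ℝ^m, the partial derivative of the log-partition function ln tr exp(λ·F) with respect to λ_{j'} equals tr(F_{j'} ξ), where ξ = exp(λ·F)/tr exp(λ·F) is the Gibbs state. -/
open Matrix

attribute [local instance] Matrix.linftyOpSemiNormedRing Matrix.linftyOpNormedRing
  Matrix.linftyOpNormedAlgebra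

noncomputable def trCLM (n : ℕ) : Matrix (Fin n) (Fin n) ℂ →L[ℂ] ℂ :=
  LinearMap.toContinuousLinearMap (Matrix.traceLinearMap (Fin n) ℂ ℂ)

noncomputable instance trCLMNormedGroup (n : ℕ) :
    NormedAddCommGroup (Matrix (Fin n) (Fin n) ℂ →L[ℂ] ℂ) :=
  ContinuousLinearMap.toNormedAddCommGroup

lemma trCLM_apply {n : ℕ} (A : Matrix (Fin n) (Fin n) ℂ) : trCLM n A = A.trace := rfl

lemma hasDerivAt_matpow {n : ℕ} (C B : Matrix (Fin n) (Fin n) ℂ) (k : ℕ) (t : ℝ) :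
    HasDerivAt (fun s : ℝ => (C + (s:ℂ) • B) ^ k)
      (∑ i ∈ Finset.range k,
        (C + (t:ℂ) • B) ^ i * B * (C + (t:ℂ) • B) ^ (k - 1 - i)) t := by
  have hM : HasDerivAt (fun s : ℝ => C + (s:ℂ) • B) B t := by
    have h1 : HasDerivAt (fun s : ℝ => (s : ℂ)) 1 t := by
      simpa using (hasDerivAt_id t).ofReal_comp
    exact ((hasDerivAt_const t C).add (h1.smul_const B)).congr_deriv (by simp)
  induction k with
  | zero => exact (hasDerivAt_const t (1 : Matrix (Fin n) (Fin n) ℂ)).congr_deriv (by simp)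
  | succ k ih =>
    have h : HasDerivAt (fun s : ℝ => (C + (s:ℂ) • B) * (C + (s:ℂ) • B) ^ k) _ t := hM.mul ih
    have hrw : (fun s : ℝ => (C + (s:ℂ) • B) * (C + (s:ℂ) • B) ^ k)
        = fun s : ℝ => (C + (s:ℂ) • B) ^ (k+1) := by
      funext s; rw [← pow_succ']
    rw [hrw] at h
    convert h using 1
    rw [Finset.sum_range_succ']
    simp only [pow_zero, one_mul, Nat.add_sub_cancel, Nat.sub_zero]
    rw [Finset.mul_sum, add_comm]
    congr 1
    refine Finset.sum_congr rfl fun i hi => ?_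
    rw [pow_succ']
    have h2 : k - (i + 1) = k - 1 - i := by omega
    rw [h2]; simp only [mul_assoc]

lemma hasDerivAt_traceterm {n : ℕ} (C B : Matrix (Fin n) (Fin n) ℂ) (k : ℕ) (t : ℝ) :
    HasDerivAt (fun s : ℝ => ((k.factorial : ℂ))⁻¹ * ((C + (s:ℂ) • B) ^ k).trace)
      (((k.factorial : ℂ))⁻¹ * ((k : ℂ) * (B * (C + (t:ℂ) • B) ^ (k-1)).trace)) t := by
  have h := (((trCLM n).restrictScalars ℝ).hasFDerivAt.comp_hasDerivAt t
    (hasDerivAt_matpow C B k t)).const_mul ((k.factorial : ℂ))⁻¹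
  refine h.congr_deriv (congrArg _ (Eq.symm ?_))
  show (k : ℂ) * (B * (C + (t:ℂ) • B) ^ (k-1)).trace
    = trCLM n (∑ i ∈ Finset.range k, (C + (t:ℂ) • B) ^ i * B * (C + (t:ℂ) • B) ^ (k - 1 - i))
  simp only [ContinuousLinearMap.coe_restrictScalars', trCLM_apply, Matrix.trace_sum]
  rw [Finset.sum_congr rfl (fun i hi => ?_), Finset.sum_const, Finset.card_range, nsmul_eq_mul]
  have hik := Finset.mem_range.mp hi
  rw [Matrix.trace_mul_comm ((C + (t:ℂ) • B) ^ i * B), ← mul_assoc, ← pow_add,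
    Matrix.trace_mul_comm]
  congr 3
  omega

lemma trace_exp_hermitian {n : ℕ} {A : Matrix (Fin n) (Fin n) ℂ} (hA : A.IsHermitian) :
    (NormedSpace.exp A).trace = ∑ i, (Real.exp (hA.eigenvalues i) : ℂ) := by
  set U : Matrix (Fin n) (Fin n) ℂ := (hA.eigenvectorUnitary : Matrix (Fin n) (Fin n) ℂ) with hUdef
  have hsU : star U * U = 1 := (Matrix.mem_unitaryGroup_iff').mp hA.eigenvectorUnitary.2
  have hUs : U * star U = 1 := (Matrix.mem_unitaryGroup_iff).mp hA.eigenvectorUnitary.2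
  have hUinv : U⁻¹ = star U := Matrix.inv_eq_left_inv hsU
  have hUnit : IsUnit U := ⟨⟨U, star U, hUs, hsU⟩, rfl⟩
  conv_lhs => rw [hA.spectral_theorem, Unitary.conjStarAlgAut_apply, ← hUinv]
  rw [Matrix.exp_conj _ _ hUnit, Matrix.trace_mul_cycle, hUinv, hsU, one_mul,
    Matrix.exp_diagonal, Matrix.trace_diagonal]
  refine Finset.sum_congr rfl fun i _ => ?_
  rw [Pi.coe_exp]
  show NormedSpace.exp ((hA.eigenvalues i : ℝ) : ℂ) = _
  rw [← Complex.exp_eq_exp_ℂ, ← Complex.ofReal_exp]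

lemma hasDerivAt_trace_exp {n : ℕ} (C B : Matrix (Fin n) (Fin n) ℂ) (t₀ : ℝ) :
    HasDerivAt (fun t : ℝ => (NormedSpace.exp (C + (t:ℂ) • B)).trace)
      ((B * NormedSpace.exp (C + (t₀:ℂ) • B)).trace) t₀ := by
  classical
  set a : ℝ := ‖C‖ + (|t₀| + 1) * ‖B‖ with ha
  have ha0 : 0 ≤ a := by positivity
  set c : ℝ := ‖trCLM n‖ * ‖B‖ with hc
  have hc0 : 0 ≤ c := by positivity
  set g : ℕ → ℝ → ℂ := fun k t => ((k.factorial : ℂ))⁻¹ * ((C + (t:ℂ) • B) ^ k).trace with hg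
  set g' : ℕ → ℝ → ℂ := fun k t =>
    ((k.factorial : ℂ))⁻¹ * ((k : ℂ) * (B * (C + (t:ℂ) • B) ^ (k-1)).trace) with hg'
  set u : ℕ → ℝ := fun k => c * ((k : ℝ) * ((k.factorial : ℝ))⁻¹ * a ^ (k-1)) with hu'
  set s : Set ℝ := Metric.ball (0:ℝ) (|t₀| + 1) with hs
  have ht₀ : t₀ ∈ s := by
    simp only [hs, Metric.mem_ball, Real.dist_eq, sub_zero]
    linarith [abs_nonneg t₀]
  -- summability of the bound
  have hfact : ∀ k : ℕ, (((k+1).factorial : ℝ)) = ((k:ℝ)+1) * k.factorial := by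
    intro k; rw [Nat.factorial_succ]; push_cast; ring
  have hu : Summable u := by
    rw [← summable_nat_add_iff 1]
    apply Summable.congr (((Real.summable_pow_div_factorial a).mul_left c))
    intro k
    show c * (a ^ k / k.factorial) = u (k+1)
    simp only [hu', Nat.add_sub_cancel]
    rw [hfact k]
    have hk : ((k:ℝ)+1) ≠ 0 := by positivity
    have hf : (k.factorial : ℝ) ≠ 0 := Nat.cast_ne_zero.mpr k.factorial_ne_zero
    push_cast
    field_simp
  -- pointwise derivatives
  have hderiv : ∀ k : ℕ, ∀ t ∈ s, HasDerivAt (g k) (g' k t) t := fun k t _ =>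
    hasDerivAt_traceterm C B k t
  -- bound on the derivatives
  have hbound : ∀ k : ℕ, ∀ t ∈ s, ‖g' k t‖ ≤ u k := by
    intro k t ht
    have hMnorm : ‖C + (t:ℂ) • B‖ ≤ a := by
      have h1 : |t| ≤ |t₀| + 1 := by
        have := Metric.mem_ball.mp ht
        rw [Real.dist_eq, sub_zero] at this
        linarith
      calc ‖C + (t:ℂ) • B‖ ≤ ‖C‖ + ‖(t:ℂ) • B‖ := norm_add_le _ _
        _ = ‖C‖ + |t| * ‖B‖ := by
            rw [norm_smul, Complex.norm_real, Real.norm_eq_abs]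
        _ ≤ a := by
            rw [ha]
            have := mul_le_mul_of_nonneg_right h1 (norm_nonneg B)
            linarith
    have hBpow : ∀ j : ℕ, ‖B * (C + (t:ℂ) • B) ^ j‖ ≤ ‖B‖ * a ^ j := by
      intro j
      rcases Nat.eq_zero_or_pos j with rfl | hj
      · simp
      · calc ‖B * (C + (t:ℂ) • B) ^ j‖ ≤ ‖B‖ * ‖(C + (t:ℂ) • B) ^ j‖ := norm_mul_le _ _
          _ ≤ ‖B‖ * ‖C + (t:ℂ) • B‖ ^ j := by
              gcongr
              exact norm_pow_le' _ hj
          _ ≤ ‖B‖ * a ^ j := by gcongr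
    have htr : ‖(B * (C + (t:ℂ) • B) ^ (k-1)).trace‖ ≤ ‖trCLM n‖ * (‖B‖ * a ^ (k-1)) := by
      calc ‖(B * (C + (t:ℂ) • B) ^ (k-1)).trace‖
          = ‖trCLM n (B * (C + (t:ℂ) • B) ^ (k-1))‖ := rfl
        _ ≤ ‖trCLM n‖ * ‖B * (C + (t:ℂ) • B) ^ (k-1)‖ := (trCLM n).le_opNorm _
        _ ≤ ‖trCLM n‖ * (‖B‖ * a ^ (k-1)) := by gcongr; exact hBpow _
    calc ‖g' k t‖ = ((k.factorial : ℝ))⁻¹ * ((k:ℝ) * ‖(B * (C + (t:ℂ) • B) ^ (k-1)).trace‖) := by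
          simp only [hg', norm_mul, norm_inv, Complex.norm_natCast]
      _ ≤ ((k.factorial : ℝ))⁻¹ * ((k:ℝ) * (‖trCLM n‖ * (‖B‖ * a ^ (k-1)))) := by
          gcongr
      _ = u k := by simp only [hu', hc]; ring
  -- summability at t₀
  have hsum0 : Summable fun k => g k t₀ := by
    have h := NormedSpace.expSeries_summable' (𝕂 := ℂ) (C + (t₀:ℂ) • B)
    have h2 := h.map (trCLM n) (trCLM n).continuous
    apply h2.congr
    intro k
    simp only [hg, Function.comp_apply, _root_.map_smul, smul_eq_mul, trCLM_apply]
  -- the derivative of the sum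
  have H := hasDerivAt_tsum_of_isPreconnected hu Metric.isOpen_ball
    (convex_ball (0:ℝ) (|t₀|+1)).isPreconnected hderiv hbound ht₀ hsum0 ht₀
  -- identify the sum with trace ∘ exp
  have hfun : (fun t : ℝ => ∑' k, g k t)
      = fun t : ℝ => (NormedSpace.exp (C + (t:ℂ) • B)).trace := by
    funext t
    have hrw : (NormedSpace.exp (C + (t:ℂ) • B)).trace
        = trCLM n (∑' k : ℕ, ((k.factorial:ℂ))⁻¹ • (C + (t:ℂ) • B) ^ k) := by
      simp only [NormedSpace.exp_eq_tsum ℂ]; rfl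
    rw [hrw, (trCLM n).map_tsum (NormedSpace.expSeries_summable' (𝕂 := ℂ) (C + (t:ℂ) • B))]
    exact tsum_congr fun k => by
      simp only [hg, _root_.map_smul, smul_eq_mul, trCLM_apply]
  -- identify the sum of derivatives
  have hsum' : Summable fun k => g' k t₀ :=
    Summable.of_norm_bounded hu fun k => hbound k t₀ ht₀
  have hval : ∑' k, g' k t₀ = (B * NormedSpace.exp (C + (t₀:ℂ) • B)).trace := by
    set L : Matrix (Fin n) (Fin n) ℂ →L[ℂ] ℂ :=
      (trCLM n).comp (ContinuousLinearMap.mul ℂ (Matrix (Fin n) (Fin n) ℂ) B) with hL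
    rw [Summable.tsum_eq_zero_add hsum']
    have h0 : g' 0 t₀ = 0 := by simp [hg']
    rw [h0, zero_add]
    have hR : (B * NormedSpace.exp (C + (t₀:ℂ) • B)).trace
        = L (NormedSpace.exp (C + (t₀:ℂ) • B)) := rfl
    rw [hR, NormedSpace.exp_eq_tsum ℂ,
      L.map_tsum (NormedSpace.expSeries_summable' (𝕂 := ℂ) (C + (t₀:ℂ) • B))]
    refine tsum_congr fun k => ?_
    have hfactC : ((k+1:ℕ).factorial : ℂ)⁻¹ * (((k:ℕ)+1 : ℂ)) = ((k.factorial : ℂ))⁻¹ := by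
      rw [Nat.factorial_succ]
      have hk : ((k:ℂ)+1) ≠ 0 := Nat.cast_add_one_ne_zero k
      have hf : (k.factorial : ℂ) ≠ 0 := Nat.cast_ne_zero.mpr k.factorial_ne_zero
      push_cast
      field_simp
    simp only [hg', hL, Nat.add_sub_cancel, ContinuousLinearMap.comp_apply,
      ContinuousLinearMap.mul_apply', _root_.map_smul, smul_eq_mul, trCLM_apply,
      Matrix.mul_smul, Matrix.trace_smul]
    push_cast
    rw [← mul_assoc, hfactC]
    rfl
  rw [hfun, hval] at H
  exact H


/-- The partial derivative of the log-partition function `ln tr exp (λ·F)` with respect to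
`λ j'` equals `tr (F j' * ξ)` where `ξ = exp(λ·F) / tr exp(λ·F)` is the Gibbs state. -/
theorem partial_deriv_log_partition_function {n m : ℕ}
    (F : Fin m → Matrix (Fin n) (Fin n) ℂ) (hF : ∀ j, (F j).IsHermitian)
    (lam : Fin m → ℝ) (j' : Fin m) :
    HasDerivAt
      (fun t : ℝ =>
        Real.log ((NormedSpace.exp (∑ j, ((Function.update lam j' t j : ℝ) : ℂ) • F j)).trace.re))
      ((F j' *
        (((NormedSpace.exp (∑ j, ((lam j : ℝ) : ℂ) • F j)).trace)⁻¹ •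
          NormedSpace.exp (∑ j, ((lam j : ℝ) : ℂ) • F j))).trace.re)
      (lam j') := by
  classical
  rcases Nat.eq_zero_or_pos n with hn | hn
  · subst hn
    have htr : ∀ A : Matrix (Fin 0) (Fin 0) ℂ, A.trace = 0 := fun A => by
      simp [Matrix.trace]
    simp only [htr, Complex.zero_re, Real.log_zero]
    exact hasDerivAt_const _ 0
  haveI : NeZero n := ⟨hn.ne'⟩
  set B : Matrix (Fin n) (Fin n) ℂ := F j' with hB
  set M₀ : Matrix (Fin n) (Fin n) ℂ := ∑ j, ((lam j : ℝ) : ℂ) • F j with hM₀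
  set C : Matrix (Fin n) (Fin n) ℂ := M₀ - ((lam j' : ℝ) : ℂ) • B with hC
  have key : ∀ t : ℝ,
      (∑ j, ((Function.update lam j' t j : ℝ) : ℂ) • F j) = C + (t:ℂ) • B := by
    intro t
    have h1 : (∑ j, ((Function.update lam j' t j : ℝ) : ℂ) • F j) - M₀
        = ((t:ℂ) - ((lam j' : ℝ) : ℂ)) • B := by
      rw [hM₀, ← Finset.sum_sub_distrib]
      rw [Finset.sum_eq_single j']
      · rw [← sub_smul, Function.update_self]
      · intro j _ hj
        rw [Function.update_of_ne hj, sub_self]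
      · simp
    have h2 := sub_eq_iff_eq_add.mp h1
    rw [h2, hC]
    module
  have hM : C + ((lam j' : ℝ) : ℂ) • B = M₀ := by
    rw [← key (lam j')]
    rw [hM₀]
    refine Finset.sum_congr rfl fun j _ => ?_
    rw [Function.update_eq_self]
  have hM₀herm : M₀.IsHermitian := by
    show M₀ᴴ = M₀
    rw [hM₀, Matrix.conjTranspose_sum]
    refine Finset.sum_congr rfl fun j _ => ?_
    rw [Matrix.conjTranspose_smul, Complex.star_def, Complex.conj_ofReal, (hF j).eq]
  have htrace := trace_exp_hermitian hM₀herm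
  have hre : (NormedSpace.exp M₀).trace.re = ∑ i, Real.exp (hM₀herm.eigenvalues i) := by
    rw [htrace, Complex.re_sum]
    exact Finset.sum_congr rfl fun i _ => Complex.ofReal_re _
  have him : (NormedSpace.exp M₀).trace.im = 0 := by
    rw [htrace, Complex.im_sum]
    simp
  have hpos : 0 < (NormedSpace.exp M₀).trace.re := by
    rw [hre]
    exact Finset.sum_pos (fun i _ => Real.exp_pos _) Finset.univ_nonempty
  have Hc : HasDerivAt (fun t : ℝ => (NormedSpace.exp (C + (t:ℂ) • B)).trace)
      ((B * NormedSpace.exp M₀).trace) (lam j') := by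
    have h := hasDerivAt_trace_exp C B (lam j')
    rwa [hM] at h
  have Hre : HasDerivAt (fun t : ℝ => (NormedSpace.exp (C + (t:ℂ) • B)).trace.re)
      ((B * NormedSpace.exp M₀).trace.re) (lam j') :=
    Complex.reCLM.hasFDerivAt.comp_hasDerivAt _ Hc
  have hne : (NormedSpace.exp (C + ((lam j' : ℝ) : ℂ) • B)).trace.re ≠ 0 := by
    rw [hM]; exact ne_of_gt hpos
  have Hlog := Hre.log hne
  have hfun : (fun t : ℝ =>
      Real.log ((NormedSpace.exp (∑ j, ((Function.update lam j' t j : ℝ) : ℂ) • F j)).trace.re))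
      = fun t : ℝ => Real.log ((NormedSpace.exp (C + (t:ℂ) • B)).trace.re) := by
    funext t; rw [key t]
  rw [hfun]
  convert Hlog using 1
  -- value equality
  set z : ℂ := (NormedSpace.exp M₀).trace with hz
  have hzre : z = ((z.re : ℝ) : ℂ) := by
    apply Complex.ext
    · simp
    · simp [him]
  rw [hM, ← hz]
  rw [Matrix.mul_smul, Matrix.trace_smul, smul_eq_mul, hzre, ← Complex.ofReal_inv,
    Complex.re_ofReal_mul]
  rw [div_eq_inv_mul]
  rw [Complex.ofReal_re]
end

section
/- (Duhamel's formula) For Hermitian matrices H and V and H(s) = H + sV, the derivative of exp(βH(s)) with respect to s equals β ∫_0^1 e^{tβH(s)} V e^{(1−t)βH(s)} dt. -/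
open Matrix NormedSpace intervalIntegral MeasureTheory
open scoped Matrix.Norms.L2Operator

variable {n : ℕ}

lemma duhamel_aux_contExp (A : Matrix (Fin n) (Fin n) ℂ) :
    Continuous fun t : ℝ => exp (t • A) :=
  (continuous_iff_continuousAt.2 fun x => (exp_analytic (𝕂 := ℂ) x).continuousAt).comp (continuous_id.smul continuous_const)

lemma duhamel_exp_sub_exp (A B : Matrix (Fin n) (Fin n) ℂ) :
    exp A - exp B
      = ∫ t in (0:ℝ)..1, exp (t • A) * (A - B) * exp ((1 - t) • B) := by
  have key : ∀ t : ℝ, HasDerivAt (fun t : ℝ => exp (t • A) * exp ((1 - t) • B))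
      (exp (t • A) * (A - B) * exp ((1 - t) • B)) t := by
    intro t
    have h1 : HasDerivAt (fun t : ℝ => exp (t • A)) (exp (t • A) * A) t :=
      hasDerivAt_exp_smul_const A t
    have h4 : HasDerivAt (fun t : ℝ => 1 - t) (-1) t := by
      simpa using (hasDerivAt_id t).const_sub 1
    have h3 : HasDerivAt (fun u : ℝ => exp (u • B)) (B * exp ((1 - t) • B)) (1 - t) :=
      hasDerivAt_exp_smul_const' B (1 - t)
    have h2 : HasDerivAt (fun t : ℝ => exp ((1 - t) • B))
        (-(B * exp ((1 - t) • B))) t := by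
      exact (h3.scomp t h4).congr_deriv (by simp)
    exact (h1.mul h2).congr_deriv (by noncomm_ring)
  have hcont : Continuous fun t : ℝ =>
      exp (t • A) * (A - B) * exp ((1 - t) • B) := by
    have c2 : Continuous fun t : ℝ => exp ((1 - t) • B) :=
      (duhamel_aux_contExp B).comp (continuous_const.sub continuous_id)
    exact ((duhamel_aux_contExp A).mul continuous_const).mul c2
  have h := intervalIntegral.integral_eq_sub_of_hasDerivAt
      (fun t _ => key t) (hcont.intervalIntegrable 0 1)
  rw [h]
  simp [exp_zero]

/-- Duhamel's formula: for Hermitian matrices `H` and `V` and `H(s) = H + s V`, the derivative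
of `exp (β H(s))` with respect to `s` equals `β ∫_0^1 e^{t β H(s)} V e^{(1-t) β H(s)} dt`. -/
theorem duhamel_formula {n : ℕ}
    (H V : Matrix (Fin n) (Fin n) ℂ) (hH : H.IsHermitian) (hV : V.IsHermitian)
    (β : ℝ) (s : ℝ) :
    HasDerivAt (fun u : ℝ => NormedSpace.exp ((β : ℂ) • (H + (u : ℂ) • V)))
      ((β : ℂ) •
        ∫ t in (0 : ℝ)..1,
          NormedSpace.exp (((t * β : ℝ) : ℂ) • (H + (s : ℂ) • V)) * V *
            NormedSpace.exp ((((1 - t) * β : ℝ) : ℂ) • (H + (s : ℂ) • V)))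
      s := by
  simp only [Complex.coe_smul]
  set G : ℝ → Matrix (Fin n) (Fin n) ℂ := fun u =>
    ∫ t in (0:ℝ)..1,
      exp ((t * β) • (H + u • V)) * V * exp (((1 - t) * β) • (H + s • V)) with hG
  show HasDerivAt _ (β • G s) s
  rw [hasDerivAt_iff_tendsto_slope]
  have hcontG : Continuous G := by
    apply intervalIntegral.continuous_parametric_intervalIntegral_of_continuous'
    apply Continuous.mul
    · apply Continuous.mul _ continuous_const
      exact (continuous_iff_continuousAt.2 fun x => (exp_analytic (𝕂 := ℂ) x).continuousAt).comp
        ((continuous_snd.mul continuous_const).smul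
          (continuous_const.add (continuous_fst.smul continuous_const)))
    · exact (continuous_iff_continuousAt.2 fun x => (exp_analytic (𝕂 := ℂ) x).continuousAt).comp
        (((continuous_const.sub continuous_snd).mul continuous_const).smul continuous_const)
  have key : ∀ u : ℝ, u ≠ s →
      slope (fun u : ℝ => exp (β • (H + u • V))) s u = β • G u := by
    intro u hu
    rw [slope_def_module, duhamel_exp_sub_exp]
    have hd : β • (H + u • V) - β • (H + s • V) = ((u - s) * β) • V := by module
    have hint : (∫ t in (0:ℝ)..1,
        exp (t • (β • (H + u • V))) * (β • (H + u • V) - β • (H + s • V)) *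
          exp ((1 - t) • (β • (H + s • V)))) = ((u - s) * β) • G u := by
      rw [hG]
      rw [← intervalIntegral.integral_smul]
      apply intervalIntegral.integral_congr
      intro t _
      simp only [hd, smul_smul, mul_smul_comm, smul_mul_assoc]
    rw [hint, smul_smul]
    congr 1
    field_simp [sub_ne_zero.2 hu]
  have htends : Filter.Tendsto (fun u => β • G u) (nhdsWithin s {s}ᶜ) (nhds (β • G s)) :=
    ((hcontG.const_smul β).tendsto s).mono_left nhdsWithin_le_nhds
  apply htends.congr'
  filter_upwards [self_mem_nhdsWithin] with u hu
  exact (key u hu).symm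
end
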